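/- arXiv:2001.03023 — 4 statements merged into one kernel-verified Lean document; each statement's English description precedes it below -/
import Mathlib

section
/- With x_{0,l} as above (x_{0,0}=0), the first-moment sum A₀ := ∑_{l=0}^∞ x_{0,l}(l + β₂/α₂) converges whenever β₁ + 1 > α₂ and equals (r/(β₁+1−α₂))·(1 + β₂/α₂). -/
/-!
Put `c = β₂/α₂` and `t = (β₁ + 1 - α₂)/α₂ > 0`. Since `(l + c) Γ(l + c) = Γ(l + c + 1)`, the
`l`-th term is a constant times `Γ(u)/Γ(u + t + 1)` with `u = l + c + 1`, and by the functional
equation this equals `g(u) - g(u + 1)` for `g(u) = Γ(u)/(t Γ(u + t))`. The series telescopes to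
its first value once `g(u) → 0`, and that follows from log-convexity of `Γ`, which gives
`Γ(u + 1)/Γ(u + 1 + t) ≤ u^(-t)`.
-/

open Real Filter Topology

namespace Real

theorem Gamma_add_one_div_Gamma_add_le_rpow {u t : ℝ} (hu : 0 < u) (ht : 0 < t) :
    Gamma (u + 1) / Gamma (u + 1 + t) ≤ u ^ (-t) := by
  have h1t : 0 < 1 + t := by linarith
  have hw : t / (1 + t) + 1 / (1 + t) = 1 := by rw [← add_div, add_comm, div_self h1t.ne']
  have hconv := convexOn_log_Gamma.2 (Set.mem_Ioi.2 hu)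
    (Set.mem_Ioi.2 (by linarith : 0 < u + 1 + t)) (by positivity) (by positivity) hw
  have hmid : (t / (1 + t)) • u + (1 / (1 + t)) • (u + 1 + t) = u + 1 := by
    simp only [smul_eq_mul]; field_simp; ring
  rw [hmid] at hconv
  simp only [Function.comp, smul_eq_mul, Gamma_add_one hu.ne',
    log_mul hu.ne' (Gamma_pos_of_pos hu).ne'] at hconv
  have hΓ : 0 < Gamma (u + 1 + t) := Gamma_pos_of_pos (by linarith)
  rw [← exp_log (div_pos (Gamma_pos_of_pos (by linarith)) hΓ), rpow_def_of_pos hu, exp_le_exp,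
    log_div (Gamma_pos_of_pos (by linarith)).ne' hΓ.ne', Gamma_add_one hu.ne',
    log_mul hu.ne' (Gamma_pos_of_pos hu).ne']
  field_simp at hconv
  linarith

theorem tendsto_Gamma_div_Gamma_add_atTop {t : ℝ} (ht : 0 < t) :
    Tendsto (fun x => Gamma x / Gamma (x + t)) atTop (𝓝 0) := by
  have hbound : ∀ᶠ x in atTop, Gamma x / Gamma (x + t) ≤ (x - 1) ^ (-t) := by
    filter_upwards [eventually_gt_atTop 1] with x hx
    simpa using Gamma_add_one_div_Gamma_add_le_rpow (sub_pos.2 hx) ht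
  have hnonneg : ∀ᶠ x in atTop, 0 ≤ Gamma x / Gamma (x + t) := by
    filter_upwards [eventually_gt_atTop 0] with x hx
    exact div_nonneg (Gamma_pos_of_pos hx).le (Gamma_pos_of_pos (by linarith)).le
  exact squeeze_zero' hnonneg hbound
    ((tendsto_rpow_neg_atTop ht).comp (tendsto_atTop_add_const_right _ (-1) tendsto_id))

end Real

theorem hasSum_sub_succ_of_tendsto_zero {g : ℕ → ℝ} (hmono : ∀ n, g (n + 1) ≤ g n)
    (hg : Tendsto g atTop (𝓝 0)) : HasSum (fun n => g n - g (n + 1)) (g 0) := by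
  rw [hasSum_iff_tendsto_nat_of_nonneg (fun n => sub_nonneg.2 (hmono n))]
  simp_rw [Finset.sum_range_sub']
  simpa using tendsto_const_nhds.sub hg

theorem hasSum_Gamma_div_Gamma_add_add_one {a t : ℝ} (ha : 0 < a) (ht : 0 < t) :
    HasSum (fun n : ℕ => Gamma (n + a) / Gamma (n + a + t + 1)) (Gamma a / Gamma (a + t) / t) := by
  set g : ℕ → ℝ := fun n => Gamma (n + a) / Gamma (n + a + t) / t
  have hstep : ∀ n : ℕ, g n - g (n + 1) = Gamma (n + a) / Gamma (n + a + t + 1) := by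
    intro n
    have hna : 0 < (n : ℝ) + a := by positivity
    have hnat : 0 < (n : ℝ) + a + t := by positivity
    simp only [g, Nat.cast_succ, add_right_comm _ (1 : ℝ), Gamma_add_one hna.ne',
      Gamma_add_one hnat.ne']
    have hΓa := (Gamma_pos_of_pos hna).ne'
    have hΓat := (Gamma_pos_of_pos hnat).ne'
    field_simp
    ring
  have hterm_nonneg : ∀ n : ℕ, 0 ≤ Gamma (n + a) / Gamma (n + a + t + 1) := fun n =>
    div_nonneg (Gamma_pos_of_pos (by positivity)).le (Gamma_pos_of_pos (by positivity)).le
  have htail : Tendsto g atTop (𝓝 0) := by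
    simpa using ((tendsto_Gamma_div_Gamma_add_atTop ht).comp
      (tendsto_atTop_add_const_right _ a tendsto_natCast_atTop_atTop)).div_const t
  have hsum := hasSum_sub_succ_of_tendsto_zero
    (fun n => sub_nonneg.1 ((hstep n).symm ▸ hterm_nonneg n)) htail
  simp only [hstep] at hsum
  simpa [g] using hsum

theorem first_moment_A0_general (α₂ β₁ β₂ r : ℝ) (hα₂ : 0 < α₂) (hβ₂ : 0 < β₂)
    (hcond : β₁ + 1 > α₂) (x : ℕ → ℝ) (hx0 : x 0 = 0)
    (hx : ∀ l : ℕ, 1 ≤ l →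
      x l = (r / α₂) *
        (Real.Gamma (1 + (β₁ + β₂ + 1) / α₂) / Real.Gamma (1 + β₂ / α₂)) *
        (Real.Gamma ((l : ℝ) + β₂ / α₂) /
          Real.Gamma ((l : ℝ) + (α₂ + (β₁ + β₂) + 1) / α₂))) :
    HasSum (fun l : ℕ => x l * ((l : ℝ) + β₂ / α₂))
      ((r / (β₁ + 1 - α₂)) * (1 + β₂ / α₂)) := by
  set c := β₂ / α₂ with hc_def
  set t := (β₁ + 1 - α₂) / α₂ with ht_def
  have hc : 0 < c := div_pos hβ₂ hα₂
  have ht : 0 < t := div_pos (by linarith) hα₂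
  have hnum : 1 + (β₁ + β₂ + 1) / α₂ = c + 2 + t := by
    rw [hc_def, ht_def]; field_simp; ring
  have hden : (α₂ + (β₁ + β₂) + 1) / α₂ = c + 2 + t := by
    rw [hc_def, ht_def]; field_simp; ring
  set K := r / α₂ * (Gamma (c + 2 + t) / Gamma (1 + c))
  have hterm : ∀ n : ℕ, x (n + 1) * (((n + 1 : ℕ) : ℝ) + c) =
      K * (Gamma (n + (c + 2)) / Gamma (n + (c + 2) + t + 1)) := by
    intro n
    have hΓ : Gamma (n + (c + 2)) = (n + 1 + c) * Gamma (n + 1 + c) := by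
      rw [show (n : ℝ) + (c + 2) = (n + 1 + c) + 1 by ring, Gamma_add_one (by positivity)]
    rw [hx (n + 1) n.succ_pos, hnum, hden, hΓ,
      show ((n + 1 : ℕ) : ℝ) + (c + 2 + t) = n + (c + 2) + t + 1 by push_cast; ring]
    push_cast
    ring
  have hvalue : K * (Gamma (c + 2) / Gamma (c + 2 + t) / t) = r / (β₁ + 1 - α₂) * (1 + c) := by
    have hΓ : Gamma (c + 2) = (1 + c) * Gamma (1 + c) := by
      rw [show c + 2 = (1 + c) + 1 by ring, Gamma_add_one (by positivity)]
    have hΓc := (Gamma_pos_of_pos (by positivity : 0 < 1 + c)).ne'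
    have hΓct := (Gamma_pos_of_pos (by positivity : 0 < c + 2 + t)).ne'
    rw [show β₁ + 1 - α₂ = α₂ * t by rw [ht_def]; field_simp]
    simp only [K, hΓ]
    field_simp
  rw [← hasSum_nat_add_iff' 1]
  simp only [Finset.sum_range_one, hx0, zero_mul, sub_zero, hterm, ← hvalue]
  exact (hasSum_Gamma_div_Gamma_add_add_one (by positivity) ht).mul_left K

theorem first_moment_A0 (α₂ β₁ β₂ r : ℝ) (hα₂ : 0 < α₂) (hβ₁ : 0 < β₁) (hβ₂ : 0 < β₂)
    (hr : 0 < r) (hcond : β₁ + 1 > α₂) (x : ℕ → ℝ) (hx0 : x 0 = 0)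
    (hx : ∀ l : ℕ, 1 ≤ l →
      x l = (r / α₂) *
        (Real.Gamma (1 + (β₁ + β₂ + 1) / α₂) / Real.Gamma (1 + β₂ / α₂)) *
        (Real.Gamma ((l : ℝ) + β₂ / α₂) /
          Real.Gamma ((l : ℝ) + (α₂ + (β₁ + β₂) + 1) / α₂))) :
    HasSum (fun l : ℕ => x l * ((l : ℝ) + β₂ / α₂))
      ((r / (β₁ + 1 - α₂)) * (1 + β₂ / α₂)) :=
  first_moment_A0_general α₂ β₁ β₂ r hα₂ hβ₂ hcond x hx0 hx
end

section
/- With x_{0,l} as above (x_{0,0}=0), and assuming β₁ + 1 > 2α₂, the sum B₀ := ∑_{l=0}^∞ x_{0,l}(l + β₂/α₂)(l + 1 + β₂/α₂) converges and equals (r/(β₁+1−2α₂)) · Γ(3+β₂/α₂)/Γ(1+β₂/α₂). -/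
/-!
With `a = β₂/α₂` and `g = (β₁ + 1 - 2α₂)/α₂ > 0`, the `l`-th term is, for `l ≥ 1`, a constant
multiple of `Γ(l + a + 2) / Γ(l + a + g + 3)`, since `Γ(l + a)(l + a)(l + a + 1) = Γ(l + a + 2)`.
The functional equation turns `Γ(s)/Γ(s + g + 1)` into the difference `(t s - t (s + 1)) / g`
of `t s = Γ(s)/Γ(s + g)`, so the series telescopes; its tail `t s` tends to zero because
log-convexity of `Γ` gives `Γ(s + g) ≥ Γ(s) (s - 1)^g`.
-/

open Real Filter Topology

theorem Real.Gamma_mul_rpow_le_Gamma_add {y g : ℝ} (hy : 1 < y) (hg : 0 < g) :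
    Gamma y * (y - 1) ^ g ≤ Gamma (y + g) := by
  have hy₁ : 0 < y - 1 := by linarith
  have slope := (convexOn_iff_slope_mono_adjacent.mp convexOn_log_Gamma).2
    (show y - 1 ∈ Set.Ioi 0 from hy₁) (show y + g ∈ Set.Ioi 0 by simp only [Set.mem_Ioi]; linarith)
    (by linarith : y - 1 < y) (by linarith : y < y + g)
  have hrec : Gamma y = (y - 1) * Gamma (y - 1) := by
    simpa using Gamma_add_one hy₁.ne'
  have hΓ₁ : 0 < Gamma (y - 1) := Gamma_pos_of_pos hy₁
  simp only [Function.comp_apply, sub_sub_cancel, div_one, add_sub_cancel_left, hrec,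
    log_mul hy₁.ne' hΓ₁.ne', le_div_iff₀ hg] at slope
  rw [← log_le_log_iff (by positivity) (Gamma_pos_of_pos (by linarith)),
    log_mul (by positivity) (by positivity), log_rpow hy₁, hrec, log_mul hy₁.ne' hΓ₁.ne']
  linarith

theorem Real.tendsto_Gamma_div_Gamma_add_atTop_s7 {g : ℝ} (hg : 0 < g) :
    Tendsto (fun y => Gamma y / Gamma (y + g)) atTop (𝓝 0) := by
  have hupper : ∀ᶠ y in atTop, Gamma y / Gamma (y + g) ≤ (y - 1) ^ (-g) := by
    filter_upwards [eventually_gt_atTop 1] with y hy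
    have hy₁ : 0 < y - 1 := by linarith
    rw [rpow_neg hy₁.le, div_le_iff₀ (Gamma_pos_of_pos (by linarith)), ← div_eq_inv_mul,
      le_div_iff₀ (rpow_pos_of_pos hy₁ g)]
    exact Gamma_mul_rpow_le_Gamma_add hy hg
  have hlower : ∀ᶠ y in atTop, 0 ≤ Gamma y / Gamma (y + g) := by
    filter_upwards [eventually_gt_atTop 0] with y hy
    positivity
  have hlim : Tendsto (fun y : ℝ => (y - 1) ^ (-g)) atTop (𝓝 0) :=
    (tendsto_rpow_neg_atTop hg).comp (tendsto_atTop_add_const_right _ _ tendsto_id)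
  exact tendsto_of_tendsto_of_tendsto_of_le_of_le' tendsto_const_nhds hlim hlower hupper

theorem hasSum_sub_succ_of_antitone {f : ℕ → ℝ} (hf : Antitone f)
    (hf₀ : Tendsto f atTop (𝓝 0)) : HasSum (fun n => f n - f (n + 1)) (f 0) := by
  rw [hasSum_iff_tendsto_nat_of_nonneg fun n => sub_nonneg.2 (hf n.le_succ)]
  simp_rw [Finset.sum_range_sub']
  simpa using tendsto_const_nhds.sub hf₀

theorem Real.Gamma_div_sub_Gamma_add_one_div {s g : ℝ} (hs : s ≠ 0) (hsg : s + g ≠ 0) :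
    Gamma s / Gamma (s + g) - Gamma (s + 1) / Gamma (s + 1 + g) =
      g * (Gamma s / Gamma (s + g + 1)) := by
  rw [Gamma_add_one hs, add_right_comm, Gamma_add_one hsg]
  rcases eq_or_ne (Gamma (s + g)) 0 with h | h
  · simp [h]
  · field_simp
    ring

theorem Real.hasSum_Gamma_div_Gamma_add {s g : ℝ} (hs : 0 < s) (hg : 0 < g) :
    HasSum (fun n : ℕ => Gamma (n + s) / Gamma (n + s + g + 1))
      (Gamma s / (g * Gamma (s + g))) := by
  set t : ℕ → ℝ := fun n => Gamma (n + s) / Gamma (n + s + g)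
  have hstep (n : ℕ) : t n - t (n + 1) = g * (Gamma (n + s) / Gamma (n + s + g + 1)) := by
    have hns : 0 < (n : ℝ) + s := by positivity
    simp only [t, Nat.cast_succ, add_right_comm _ (1 : ℝ) s]
    exact Gamma_div_sub_Gamma_add_one_div hns.ne' (by linarith)
  have hanti : Antitone t := antitone_nat_of_succ_le fun n => by
    have : 0 ≤ g * (Gamma (n + s) / Gamma (n + s + g + 1)) := by positivity
    linarith [hstep n]
  have hlim : Tendsto t atTop (𝓝 0) :=
    (tendsto_Gamma_div_Gamma_add_atTop_s7 hg).comp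
      (tendsto_atTop_add_const_right _ s tendsto_natCast_atTop_atTop)
  have htel := hasSum_sub_succ_of_antitone hanti hlim
  rw [funext hstep] at htel
  have ht₀ : g * (Gamma s / (g * Gamma (s + g))) = t 0 := by
    simp only [t, Nat.cast_zero, zero_add]
    field_simp
  exact (hasSum_mul_left_iff hg.ne').1 (ht₀ ▸ htel)

theorem second_moment_B0_general (α₂ β₁ β₂ r : ℝ) (hα₂ : 0 < α₂) (hβ₂ : 0 < β₂)
    (hcond : β₁ + 1 > 2 * α₂) (x : ℕ → ℝ) (hx0 : x 0 = 0)
    (hx : ∀ l : ℕ, 1 ≤ l →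
      x l = (r / α₂) *
        (Real.Gamma (1 + (β₁ + β₂ + 1) / α₂) / Real.Gamma (1 + β₂ / α₂)) *
        (Real.Gamma ((l : ℝ) + β₂ / α₂) /
          Real.Gamma ((l : ℝ) + (α₂ + (β₁ + β₂) + 1) / α₂))) :
    HasSum (fun l : ℕ => x l * ((l : ℝ) + β₂ / α₂) * ((l : ℝ) + 1 + β₂ / α₂))
      ((r / (β₁ + 1 - 2 * α₂)) *
        (Real.Gamma (3 + β₂ / α₂) / Real.Gamma (1 + β₂ / α₂))) := by
  set a := β₂ / α₂
  set g := (β₁ + 1 - 2 * α₂) / α₂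
  have ha : 0 < a := by positivity
  have hg : 0 < g := div_pos (by linarith) hα₂
  have hexp₁ : 1 + (β₁ + β₂ + 1) / α₂ = 3 + a + g := by simp only [a, g]; field_simp; ring
  have hexp₂ : (α₂ + (β₁ + β₂) + 1) / α₂ = 3 + a + g := by simp only [a, g]; field_simp; ring
  set C := r / α₂ * (Gamma (3 + a + g) / Gamma (1 + a))
  have hterm (n : ℕ) : x (n + 1) * ((n : ℝ) + 1 + a) * ((n : ℝ) + 1 + 1 + a) =
      C * (Gamma (n + (3 + a)) / Gamma (n + (3 + a) + g + 1)) := by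
    have hna : 0 < (n : ℝ) + 1 + a := by positivity
    rw [hx (n + 1) (Nat.le_add_left 1 n), hexp₁, hexp₂, Nat.cast_succ,
      show (n : ℝ) + (3 + a) + g + 1 = n + 1 + (3 + a + g) by ring,
      show (n : ℝ) + (3 + a) = n + 1 + a + 1 + 1 by ring,
      Gamma_add_one (by positivity), Gamma_add_one hna.ne']
    ring
  have hvalue : r / (β₁ + 1 - 2 * α₂) * (Gamma (3 + a) / Gamma (1 + a)) =
      C * (Gamma (3 + a) / (g * Gamma (3 + a + g))) := by
    have hαg : β₁ + 1 - 2 * α₂ = α₂ * g := by simp only [g]; field_simp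
    have : Gamma (3 + a + g) ≠ 0 := by positivity
    rw [hαg]
    simp only [C]
    field_simp
  rw [hvalue, ← hasSum_nat_add_iff' 1]
  simpa [hterm, hx0] using (hasSum_Gamma_div_Gamma_add (s := 3 + a) (by positivity) hg).mul_left C

theorem second_moment_B0 (α₂ β₁ β₂ r : ℝ) (hα₂ : 0 < α₂) (hβ₁ : 0 < β₁) (hβ₂ : 0 < β₂)
    (hr : 0 < r) (hcond : β₁ + 1 > 2 * α₂) (x : ℕ → ℝ) (hx0 : x 0 = 0)
    (hx : ∀ l : ℕ, 1 ≤ l →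
      x l = (r / α₂) *
        (Real.Gamma (1 + (β₁ + β₂ + 1) / α₂) / Real.Gamma (1 + β₂ / α₂)) *
        (Real.Gamma ((l : ℝ) + β₂ / α₂) /
          Real.Gamma ((l : ℝ) + (α₂ + (β₁ + β₂) + 1) / α₂))) :
    HasSum (fun l : ℕ => x l * ((l : ℝ) + β₂ / α₂) * ((l : ℝ) + 1 + β₂ / α₂))
      ((r / (β₁ + 1 - 2 * α₂)) *
        (Real.Gamma (3 + β₂ / α₂) / Real.Gamma (1 + β₂ / α₂))) :=
  second_moment_B0_general α₂ β₁ β₂ r hα₂ hβ₂ hcond x hx0 hx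
end

section
/- Define b^{(l)}_{w₁-1,i} = ((w₁-1)α₁+β₁)/α₂ · Γ(l+β₂/α₂)/Γ(l+1+(w₁α₁+β+1)/α₂) · Γ(i+(w₁α₁+β+1)/α₂)/Γ(i+β₂/α₂) for 1 ≤ i ≤ l. Then for each fixed i ≥ 1, ∑_{l=i}^∞ b^{(l)}_{w₁-1,i} = ((w₁-1)α₁+β₁)/(w₁α₁+β₁+1). -/
/-!
Put `c = β₂/α₂` and `d = (w₁α₁ + β + 1)/α₂`, so that `d - c = (w₁α₁ + β₁ + 1)/α₂ > 0`. With
`g l = Γ(l + c)/Γ(l + d)`, the functional equation `Γ(s + 1) = s Γ(s)` gives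
`g l - g (l + 1) = (d - c) Γ(l + c)/Γ(l + 1 + d)`, so the series telescopes to `g i/(d - c)`
because `g l → 0`. The decay `Γ(l + c)/Γ(l + d) ~ l^(c - d)` comes from Euler's limit formula.
-/

open Real Filter Topology

lemma hasSum_sub_succ_of_tendsto {f : ℕ → ℝ} {l : ℝ} (hf : ∀ n, f (n + 1) ≤ f n)
    (hl : Tendsto f atTop (𝓝 l)) : HasSum (fun n ↦ f n - f (n + 1)) (f 0 - l) := by
  rw [hasSum_iff_tendsto_nat_of_nonneg fun n ↦ sub_nonneg.2 (hf n)]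
  simpa only [Finset.sum_range_sub'] using tendsto_const_nhds.sub hl

namespace Real

lemma Gamma_add_nat_eq_mul_prod {s : ℝ} (hs : ∀ k : ℕ, s + k ≠ 0) (n : ℕ) :
    Gamma (s + n) = Gamma s * ∏ j ∈ Finset.range n, (s + j) := by
  induction n with
  | zero => simp
  | succ n ih =>
    rw [Nat.cast_succ, ← add_assoc, Gamma_add_one (hs n), ih, Finset.prod_range_succ]
    ring

lemma GammaSeq_mul_Gamma_add_nat_add_one {s : ℝ} (hs : ∀ k : ℕ, s + k ≠ 0) (n : ℕ) :
    GammaSeq s n * Gamma (s + (n + 1)) = n ^ s * n.factorial * Gamma s := by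
  have hprod : ∏ j ∈ Finset.range (n + 1), (s + j) ≠ 0 :=
    Finset.prod_ne_zero_iff.2 fun j _ ↦ hs j
  rw [GammaSeq, ← Nat.cast_succ, Gamma_add_nat_eq_mul_prod hs]
  field_simp

lemma GammaSeq_pos {s : ℝ} (hs : 0 < s) {n : ℕ} (hn : n ≠ 0) : 0 < GammaSeq s n := by
  have : 0 < ∏ j ∈ Finset.range (n + 1), (s + j) := Finset.prod_pos fun j _ ↦ by positivity
  unfold GammaSeq
  positivity

lemma Gamma_add_nat_add_one_div_Gamma_add_nat_add_one {x y : ℝ} (hx : 0 < x) (hy : 0 < y)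
    {n : ℕ} (hn : n ≠ 0) :
    Gamma (x + (n + 1)) / Gamma (y + (n + 1)) =
      n ^ (x - y) * (GammaSeq y n / GammaSeq x n) * (Gamma x / Gamma y) := by
  have hn' : (0 : ℝ) < n := by positivity
  have hΓy := (Gamma_pos_of_pos hy).ne'
  have hPx := (GammaSeq_pos hx hn).ne'
  have hPy := (GammaSeq_pos hy hn).ne'
  have hnx := GammaSeq_mul_Gamma_add_nat_add_one (s := x) (fun k ↦ by positivity) n
  have hny := GammaSeq_mul_Gamma_add_nat_add_one (s := y) (fun k ↦ by positivity) n
  rw [eq_div_of_mul_eq hPx ((mul_comm _ _).trans hnx),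
    eq_div_of_mul_eq hPy ((mul_comm _ _).trans hny), rpow_sub hn']
  field_simp

lemma tendsto_Gamma_add_nat_div_Gamma_add_nat {x y : ℝ} (hx : 0 < x) (hxy : x < y) :
    Tendsto (fun n : ℕ ↦ Gamma (x + n) / Gamma (y + n)) atTop (𝓝 0) := by
  have hy : 0 < y := hx.trans hxy
  have hlim : Tendsto (fun n : ℕ ↦ (n : ℝ) ^ (x - y) * (GammaSeq y n / GammaSeq x n) *
      (Gamma x / Gamma y)) atTop (𝓝 (0 * (Gamma y / Gamma x) * (Gamma x / Gamma y))) := by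
    rw [← neg_sub]
    exact (((tendsto_rpow_neg_atTop (sub_pos.2 hxy)).comp tendsto_natCast_atTop_atTop).mul
      ((GammaSeq_tendsto_Gamma y).div (GammaSeq_tendsto_Gamma x)
        (Gamma_pos_of_pos hx).ne')).mul_const _
  rw [zero_mul, zero_mul] at hlim
  rw [← tendsto_add_atTop_iff_nat 1]
  refine hlim.congr' ?_
  filter_upwards [eventually_ne_atTop 0] with n hn
  rw [Nat.cast_succ, Gamma_add_nat_add_one_div_Gamma_add_nat_add_one hx hy hn]

lemma Gamma_div_Gamma_sub_Gamma_add_one_div_Gamma_add_one {x y : ℝ} (hx : x ≠ 0) (hy : 0 < y) :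
    Gamma x / Gamma y - Gamma (x + 1) / Gamma (y + 1) = (y - x) * (Gamma x / Gamma (y + 1)) := by
  have := (Gamma_pos_of_pos hy).ne'
  rw [Gamma_add_one hx, Gamma_add_one hy.ne']
  field_simp

theorem hasSum_Gamma_add_nat_div_Gamma_add_nat_add_one {x y : ℝ} (hx : 0 < x) (hxy : x < y) :
    HasSum (fun n : ℕ ↦ Gamma (x + n) / Gamma (y + n + 1)) (Gamma x / Gamma y / (y - x)) := by
  have hy : 0 < y := hx.trans hxy
  have hyx : 0 < y - x := sub_pos.2 hxy
  have hstep (n : ℕ) :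
      Gamma (x + n) / Gamma (y + n) - Gamma (x + ↑(n + 1)) / Gamma (y + ↑(n + 1)) =
        (y - x) * (Gamma (x + n) / Gamma (y + n + 1)) := by
    rw [Nat.cast_succ, ← add_assoc, ← add_assoc,
      Gamma_div_Gamma_sub_Gamma_add_one_div_Gamma_add_one (by positivity) (by positivity)]
    ring
  have hanti (n : ℕ) :
      Gamma (x + ↑(n + 1)) / Gamma (y + ↑(n + 1)) ≤ Gamma (x + n) / Gamma (y + n) := by
    rw [← sub_nonneg, hstep]
    positivity
  have hsum := hasSum_sub_succ_of_tendsto hanti (tendsto_Gamma_add_nat_div_Gamma_add_nat hx hxy)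
  simp only [hstep, Nat.cast_zero, add_zero, sub_zero] at hsum
  rwa [← hasSum_mul_left_iff hyx.ne', mul_div_cancel₀ _ hyx.ne']

end Real

theorem sum_b_coeff_general (α₁ α₂ β₁ β₂ : ℝ) (hα₁ : 0 < α₁) (hα₂ : 0 < α₂)
    (hβ₁ : 0 < β₁) (hβ₂ : 0 < β₂) (w₁ : ℕ)
    (i : ℕ) (b : ℕ → ℝ)
    (hb : ∀ l : ℕ,
      b l = (((w₁ : ℝ) - 1) * α₁ + β₁) / α₂ *
        (Real.Gamma ((l : ℝ) + β₂ / α₂) /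
          Real.Gamma ((l : ℝ) + 1 + ((w₁ : ℝ) * α₁ + (β₁ + β₂) + 1) / α₂)) *
        (Real.Gamma ((i : ℝ) + ((w₁ : ℝ) * α₁ + (β₁ + β₂) + 1) / α₂) /
          Real.Gamma ((i : ℝ) + β₂ / α₂))) :
    HasSum (fun k : ℕ => b (i + k))
      ((((w₁ : ℝ) - 1) * α₁ + β₁) / ((w₁ : ℝ) * α₁ + β₁ + 1)) := by
  set c := β₂ / α₂
  set d := ((w₁ : ℝ) * α₁ + (β₁ + β₂) + 1) / α₂
  set A := ((w₁ : ℝ) - 1) * α₁ + β₁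
  have hdc : d - c = ((w₁ : ℝ) * α₁ + β₁ + 1) / α₂ := by
    simp only [c, d]
    field_simp
    ring
  have hc : 0 < c := by positivity
  have hcd : c < d := sub_pos.1 (hdc ▸ by positivity)
  have hΓc := (Gamma_pos_of_pos (show 0 < (i : ℝ) + c by positivity)).ne'
  have hΓd := (Gamma_pos_of_pos (show 0 < (i : ℝ) + d by linarith)).ne'
  have hS := (hasSum_Gamma_add_nat_div_Gamma_add_nat_add_one (x := i + c) (y := i + d)
    (by positivity) (by linarith)).mul_left (A / α₂ * (Gamma (i + d) / Gamma (i + c)))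
  have hterm : (fun k ↦ b (i + k)) =
      fun k : ℕ ↦ A / α₂ * (Gamma (i + d) / Gamma (i + c)) *
        (Gamma (i + c + k) / Gamma (i + d + k + 1)) := by
    funext k
    rw [hb]
    push_cast
    ring_nf
  have hval : A / ((w₁ : ℝ) * α₁ + β₁ + 1) = A / α₂ * (Gamma (i + d) / Gamma (i + c)) *
      (Gamma (i + c) / Gamma (i + d) / (i + d - (i + c))) := by
    rw [add_sub_add_left_eq_sub, hdc]
    field_simp
  rwa [hterm, hval]

theorem sum_b_coeff (α₁ α₂ β₁ β₂ : ℝ) (hα₁ : 0 < α₁) (hα₂ : 0 < α₂)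
    (hβ₁ : 0 < β₁) (hβ₂ : 0 < β₂) (w₁ : ℕ) (hw₁ : 1 ≤ w₁)
    (i : ℕ) (hi : 1 ≤ i) (b : ℕ → ℝ)
    (hb : ∀ l : ℕ,
      b l = (((w₁ : ℝ) - 1) * α₁ + β₁) / α₂ *
        (Real.Gamma ((l : ℝ) + β₂ / α₂) /
          Real.Gamma ((l : ℝ) + 1 + ((w₁ : ℝ) * α₁ + (β₁ + β₂) + 1) / α₂)) *
        (Real.Gamma ((i : ℝ) + ((w₁ : ℝ) * α₁ + (β₁ + β₂) + 1) / α₂) /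
          Real.Gamma ((i : ℝ) + β₂ / α₂))) :
    HasSum (fun k : ℕ => b (i + k))
      ((((w₁ : ℝ) - 1) * α₁ + β₁) / ((w₁ : ℝ) * α₁ + β₁ + 1)) :=
  sum_b_coeff_general α₁ α₂ β₁ β₂ hα₁ hα₂ hβ₁ hβ₂ w₁ i b hb
end

section
/- With b^{(l)}_{w₁-1,i} defined as above and assuming w₁α₁ + β₁ + 1 > α₂, for each fixed i ≥ 1 we have ∑_{l=i}^∞ b^{(l)}_{w₁-1,i}·(l + β₂/α₂) = ((w₁-1)α₁+β₁)/(w₁α₁+β₁+1−α₂) · (i + β₂/α₂). -/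
open Real Filter Topology

/-!
With `c = β₂/α₂` and `d = (w₁α₁ + β + 1)/α₂`, the identity `Γ(l + c)(l + c) = Γ(l + c + 1)` makes
the summand a constant multiple of `Γ(x + k) / Γ(x + k + δ + 1)`, where `x = i + c + 1` and
`δ = d - c - 1 > 0`. These terms telescope: for `R(y) = Γ(y) / Γ(y + δ)` one has
`Γ(y) / Γ(y + δ + 1) = (R(y) - R(y + 1)) / δ`. The remainder `R(x + n)` tends to `0`, because
`R(x + n + 1) = R(x + n) (1 - δ / (x + n + δ))` and `∑ δ / (x + n + δ)` diverges.
-/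

theorem tendsto_zero_of_succ_le_mul_one_sub {u a : ℕ → ℝ} (hu : ∀ n, 0 ≤ u n)
    (ha : ∀ n, 0 ≤ a n) (ha_div : ¬Summable a) (hstep : ∀ n, u (n + 1) ≤ u n * (1 - a n)) :
    Tendsto u atTop (𝓝 0) := by
  have hanti : Antitone u :=
    antitone_nat_of_succ_le fun n => by nlinarith [mul_nonneg (hu n) (ha n), hstep n]
  have hbdd : BddBelow (Set.range u) := ⟨0, by rintro _ ⟨n, rfl⟩; exact hu n⟩
  have hlim := tendsto_atTop_ciInf hanti hbdd
  suffices hL : ⨅ n, u n = 0 by rwa [hL] at hlim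
  by_contra hL
  have hLpos : 0 < ⨅ n, u n := (le_ciInf hu).lt_of_ne' hL
  -- A positive limit would make `a` summable by comparison with the telescoping differences.
  have hdiff : Summable fun n => u n - u (n + 1) :=
    summable_of_sum_range_le (c := u 0) (fun n => sub_nonneg.2 (hanti n.le_succ)) fun n => by
      rw [Finset.sum_range_sub']; linarith [hu n]
  refine ha_div (Summable.of_nonneg_of_le ha (fun n => ?_) (hdiff.div_const (⨅ n, u n)))
  rw [le_div_iff₀ hLpos]
  nlinarith [ciInf_le hbdd n, hstep n, ha n]

theorem Gamma_add_one_div_Gamma_add_one_add {x δ : ℝ} (hx : x ≠ 0) (hxδ : x + δ ≠ 0) :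
    Gamma (x + 1) / Gamma (x + 1 + δ) = Gamma x / Gamma (x + δ) * (1 - δ / (x + δ)) := by
  rw [add_right_comm, Gamma_add_one hx, Gamma_add_one hxδ, one_sub_div hxδ, add_sub_cancel_right,
    mul_div_mul_comm, mul_comm]

theorem Gamma_div_Gamma_add_add_one {x δ : ℝ} (hx : x ≠ 0) (hδ : δ ≠ 0) (hxδ : x + δ ≠ 0) :
    Gamma x / Gamma (x + δ + 1) =
      (Gamma x / Gamma (x + δ) - Gamma (x + 1) / Gamma (x + 1 + δ)) / δ := by
  rw [Gamma_add_one_div_Gamma_add_one_add hx hxδ, Gamma_add_one hxδ]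
  field_simp
  ring

theorem tendsto_Gamma_div_Gamma_add_atTop {x δ : ℝ} (hx : 0 < x) (hδ : 0 < δ) :
    Tendsto (fun n : ℕ => Gamma (x + n) / Gamma (x + n + δ)) atTop (𝓝 0) := by
  have hpos (n : ℕ) : 0 < x + n := by positivity
  refine tendsto_zero_of_succ_le_mul_one_sub (a := fun n => δ / (x + n + δ))
    (fun n => by have := hpos n; positivity) (fun n => by have := hpos n; positivity)
    (fun hsum => ?_) (fun n => ?_)
  · have := (Real.summable_one_div_nat_add_rpow (x + δ) 1).not.2 (lt_irrefl 1)
    refine this ((hsum.div_const δ).congr fun n => ?_)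
    rw [rpow_one, abs_of_pos (by positivity)]
    field_simp
    ring
  · rw [Nat.cast_succ, ← add_assoc,
      Gamma_add_one_div_Gamma_add_one_add (hpos n).ne' (by have := hpos n; positivity)]

theorem hasSum_Gamma_div_Gamma_add_add_one_s10 {x δ : ℝ} (hx : 0 < x) (hδ : 0 < δ) :
    HasSum (fun k : ℕ => Gamma (x + k) / Gamma (x + k + δ + 1)) (Gamma x / Gamma (x + δ) / δ) := by
  set R : ℕ → ℝ := fun n => Gamma (x + n) / Gamma (x + n + δ)
  have hpos (n : ℕ) : 0 < x + n := by positivity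
  have hterm (k : ℕ) : Gamma (x + k) / Gamma (x + k + δ + 1) = (R k - R (k + 1)) / δ := by
    rw [Gamma_div_Gamma_add_add_one (hpos k).ne' hδ.ne' (by have := hpos k; positivity)]
    simp only [R, Nat.cast_succ, add_assoc]
  rw [hasSum_iff_tendsto_nat_of_nonneg fun k => by
    have := hpos k; exact (div_pos (Gamma_pos_of_pos this) (Gamma_pos_of_pos (by positivity))).le]
  simp only [hterm, ← Finset.sum_div, Finset.sum_range_sub']
  simpa [R] using ((tendsto_Gamma_div_Gamma_add_atTop hx hδ).const_sub (R 0)).div_const δ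

theorem sum_b_coeff_first_moment_general (α₁ α₂ β₁ β₂ : ℝ) (hα₂ : 0 < α₂)
    (hβ₂ : 0 < β₂) (w₁ : ℕ)
    (hcond : (w₁ : ℝ) * α₁ + β₁ + 1 > α₂)
    (i : ℕ) (b : ℕ → ℝ)
    (hb : ∀ l : ℕ,
      b l = (((w₁ : ℝ) - 1) * α₁ + β₁) / α₂ *
        (Real.Gamma ((l : ℝ) + β₂ / α₂) /
          Real.Gamma ((l : ℝ) + 1 + ((w₁ : ℝ) * α₁ + (β₁ + β₂) + 1) / α₂)) *
        (Real.Gamma ((i : ℝ) + ((w₁ : ℝ) * α₁ + (β₁ + β₂) + 1) / α₂) /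
          Real.Gamma ((i : ℝ) + β₂ / α₂))) :
    HasSum (fun k : ℕ => b (i + k) * (((i + k : ℕ) : ℝ) + β₂ / α₂))
      ((((w₁ : ℝ) - 1) * α₁ + β₁) / ((w₁ : ℝ) * α₁ + β₁ + 1 - α₂) *
        ((i : ℝ) + β₂ / α₂)) := by
  set c := β₂ / α₂
  set d := ((w₁ : ℝ) * α₁ + (β₁ + β₂) + 1) / α₂
  set K := (((w₁ : ℝ) - 1) * α₁ + β₁) / α₂ * (Gamma (i + d) / Gamma (i + c))
  have hc : 0 < i + c := by positivity
  have hδ : d - c - 1 = ((w₁ : ℝ) * α₁ + β₁ + 1 - α₂) / α₂ := by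
    simp only [c, d]; field_simp; ring
  have hδpos : 0 < d - c - 1 := by rw [hδ]; exact div_pos (by linarith) hα₂
  have hterm (k : ℕ) : b (i + k) * (((i + k : ℕ) : ℝ) + c) =
      K * (Gamma (i + c + 1 + k) / Gamma (i + c + 1 + k + (d - c - 1) + 1)) := by
    have hl : (((i + k : ℕ) : ℝ) + c) ≠ 0 := by positivity
    rw [hb, show (i : ℝ) + c + 1 + k = ((i + k : ℕ) : ℝ) + c + 1 by push_cast; ring,
      Gamma_add_one hl,
      show ((i + k : ℕ) : ℝ) + c + 1 + (d - c - 1) + 1 = ((i + k : ℕ) : ℝ) + 1 + d by ring]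
    ring
  have hval : (((w₁ : ℝ) - 1) * α₁ + β₁) / ((w₁ : ℝ) * α₁ + β₁ + 1 - α₂) * (i + c) =
      K * (Gamma (i + c + 1) / Gamma (i + c + 1 + (d - c - 1)) / (d - c - 1)) := by
    rw [show (i : ℝ) + c + 1 + (d - c - 1) = i + d by ring, Gamma_add_one hc.ne', hδ]
    have hΓ : Gamma (i + d) ≠ 0 := (Gamma_pos_of_pos (by linarith)).ne'
    simp only [K]
    field_simp [hΓ, (Gamma_pos_of_pos hc).ne']
  simp_rw [hterm, hval]
  exact (hasSum_Gamma_div_Gamma_add_add_one_s10 (by positivity) hδpos).mul_left K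

theorem sum_b_coeff_first_moment (α₁ α₂ β₁ β₂ : ℝ) (hα₁ : 0 < α₁) (hα₂ : 0 < α₂)
    (hβ₁ : 0 < β₁) (hβ₂ : 0 < β₂) (w₁ : ℕ) (hw₁ : 1 ≤ w₁)
    (hcond : (w₁ : ℝ) * α₁ + β₁ + 1 > α₂)
    (i : ℕ) (hi : 1 ≤ i) (b : ℕ → ℝ)
    (hb : ∀ l : ℕ,
      b l = (((w₁ : ℝ) - 1) * α₁ + β₁) / α₂ *
        (Real.Gamma ((l : ℝ) + β₂ / α₂) /
          Real.Gamma ((l : ℝ) + 1 + ((w₁ : ℝ) * α₁ + (β₁ + β₂) + 1) / α₂)) *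
        (Real.Gamma ((i : ℝ) + ((w₁ : ℝ) * α₁ + (β₁ + β₂) + 1) / α₂) /
          Real.Gamma ((i : ℝ) + β₂ / α₂))) :
    HasSum (fun k : ℕ => b (i + k) * (((i + k : ℕ) : ℝ) + β₂ / α₂))
      ((((w₁ : ℝ) - 1) * α₁ + β₁) / ((w₁ : ℝ) * α₁ + β₁ + 1 - α₂) *
        ((i : ℝ) + β₂ / α₂)) :=
  sum_b_coeff_first_moment_general α₁ α₂ β₁ β₂ hα₂ hβ₂ w₁ hcond i b hb
end
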